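/- arXiv:1408.1647 — 8 statements merged into one kernel-verified Lean document; each statement's English description precedes it below -/
import Mathlib

section
/- The union of a chain of admissible sets is admissible: if (A_i)_{i∈I} is a family of admissible sets of AF = (S, E) totally ordered by inclusion, then ⋃_i A_i is admissible. -/
/-- Attackers of a set `A` within the framework `(S, E)`: `E⁻(A)`. -/
def attackersOf {α : Type*} (S : Set α) (E : Set (α × α)) (A : Set α) : Set α :=
  {y ∈ S | ∃ x ∈ A, (y, x) ∈ E}

/-- Arguments attacked by a set `A` within the framework `(S, E)`: `E⁺(A)`. -/
def attackedBy {α : Type*} (S : Set α) (E : Set (α × α)) (A : Set α) : Set α :=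
  {y ∈ S | ∃ x ∈ A, (x, y) ∈ E}

/-- `A` is admissible in the argumentation framework `(S, E)`:
`A ⊆ S` and `E⁻(A) ⊆ E⁺(A) ⊆ S \ A`. -/
def IsAdmissible {α : Type*} (S : Set α) (E : Set (α × α)) (A : Set α) : Prop :=
  A ⊆ S ∧ attackersOf S E A ⊆ attackedBy S E A ∧ attackedBy S E A ⊆ S \ A

/-- `A` is preferred (maximal admissible) in `(S, E)`. -/
def IsPreferred {α : Type*} (S : Set α) (E : Set (α × α)) (A : Set α) : Prop :=
  IsAdmissible S E A ∧ ∀ B, IsAdmissible S E B → A ⊆ B → A = B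

/-- The symmetrization of the attack relation `E`, restricted to `S`. -/
def undirected {α : Type*} (E : Set (α × α)) (S : Set α) (u v : α) : Prop :=
  u ∈ S ∧ v ∈ S ∧ ((u, v) ∈ E ∨ (v, u) ∈ E)

/-- The connected component of `x` in `(S, E)`. -/
def comp {α : Type*} (S : Set α) (E : Set (α × α)) (x : α) : Set α :=
  {y ∈ S | Relation.EqvGen (undirected E S) x y}

/-- The maximal connected components of `(S, E)`. -/
def components {α : Type*} (S : Set α) (E : Set (α × α)) : Set (Set α) :=
  {C | ∃ x ∈ S, C = comp S E x}

/-- Restriction of an attack relation to a set of arguments: `E ∩ (C × C)`. -/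
def restrict {α : Type*} (E : Set (α × α)) (C : Set α) : Set (α × α) :=
  {e ∈ E | e.1 ∈ C ∧ e.2 ∈ C}

/-- The set of complete assents (possible consensuses) for a basis `V`. -/
def Cons {α A : Type*} (V : A → Set (α × α)) : Set (Set (α × α)) :=
  {F | (⋂ a, V a) ⊆ F ∧ F ⊆ ⋃ a, V a}

/-- States of the deliberative Kripke model induced by the basis `V`. -/
def IsState {α A : Type*} (V : A → Set (α × α)) (q : Set α × Set (α × α)) : Prop :=
  (⋂ a, restrict (V a) q.1) ⊆ q.2 ∧ q.2 ⊆ ⋃ a, restrict (V a) q.1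

/-- The `p`-update (deliberative event) relation between states. -/
def Step {α A : Type*} (V : A → Set (α × α)) (p : α)
    (q q' : Set α × Set (α × α)) : Prop :=
  q'.1 = q.1 ∪ {p} ∧ ∃ X, (⋂ a, restrict (V a) (q.1 ∪ {p})) ⊆ X ∧
    X ⊆ (⋃ a, restrict (V a) (q.1 ∪ {p})) ∧ q'.2 = q.2 ∪ X

/-- The `n`-vicinity `D(V, Φ, n)` of a set of arguments `Φ`, w.r.t. `U = ⋃ a, V a`. -/
def vicinity {α : Type*} (U : Set (α × α)) (Φ : Set α) : ℕ → Set α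
  | 0 => Φ
  | n + 1 => vicinity U Φ n ∪ {p | ∃ q ∈ vicinity U Φ n, (p, q) ∈ U ∨ (q, p) ∈ U}

/-- Undirected adjacency for an attack relation. -/
def undirEdge {α : Type*} (E : Set (α × α)) (u v : α) : Prop :=
  (u, v) ∈ E ∨ (v, u) ∈ E

/-- Path-based `n`-vicinity: arguments connected to `Φ` by an undirected path
with at most `n + 1` nodes. -/
def pathVicinity {α : Type*} (E : Set (α × α)) (Φ : Set α) (n : ℕ) : Set α :=
  {x | ∃ l : List α, ∃ h : l ≠ [], l.length ≤ n + 1 ∧ l.head h = x ∧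
    l.getLast h ∈ Φ ∧ l.Chain' (undirEdge E)}

/-- Formulas of three-valued Łukasiewicz logic over atoms `α`. -/
inductive LForm (α : Type*) where
  | atom : α → LForm α
  | lneg : LForm α → LForm α
  | limp : LForm α → LForm α → LForm α

/-- Three-valued Łukasiewicz valuation of a formula. -/
def lval {α : Type*} (v : α → ℚ) : LForm α → ℚ
  | .atom p => v p
  | .lneg a => 1 - lval v a
  | .limp a b => min 1 (1 - (lval v a - lval v b))

/-- Atoms of a Łukasiewicz formula. -/
def LForm.atoms {α : Type*} : LForm α → Set α
  | .atom p => {p}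
  | .lneg a => a.atoms
  | .limp a b => a.atoms ∪ b.atoms

/-- Formulas of deliberative dynamic logic. -/
inductive DForm (α : Type*) where
  | cdia : LForm α → DForm α
  | dneg : DForm α → DForm α
  | dand : DForm α → DForm α → DForm α
  | ddia : α → DForm α → DForm α
  | edia : DForm α → DForm α

/-- Atoms occurring inside `◆`-subformulas. -/
def DForm.watoms {α : Type*} : DForm α → Set α
  | .cdia a => a.atoms
  | .dneg f => f.watoms
  | .dand f g => f.watoms ∪ g.watoms
  | .ddia _ f => f.watoms
  | .edia f => f.watoms

/-- White modal depth of a formula. -/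
def DForm.wd {α : Type*} : DForm α → ℕ
  | .cdia _ => 0
  | .dneg f => f.wd
  | .dand f g => max f.wd g.wd
  | .ddia _ f => 1 + f.wd
  | .edia f => 1 + f.wd

open Classical in
/-- The three-valued labelling induced by an extension `ext` of the AF encoded
by the state `q`: `1` on the extension, `0` on arguments of `q` attacked by the
extension, `1/2` otherwise. -/
noncomputable def stateVal {α : Type*} (q : Set α × Set (α × α)) (ext : Set α) (p : α) : ℚ :=
  if p ∈ ext then 1 else if p ∈ q.1 ∧ ∃ x ∈ ext, (x, p) ∈ q.2 then 0 else 1/2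

/-- Satisfaction of deliberative dynamic logic formulas on the deliberative
Kripke model induced by the basis `V` and semantics `σ`. -/
def Sat {α A : Type*} (V : A → Set (α × α)) (σ : Set α → Set (α × α) → Set (Set α)) :
    DForm α → Set α × Set (α × α) → Prop
  | .cdia a, q => ∃ ext ∈ σ q.1 q.2, lval (stateVal q ext) a = 1
  | .dneg f, q => ¬ Sat V σ f q
  | .dand f g, q => Sat V σ f q ∧ Sat V σ g q
  | .ddia p f, q => ∃ q', Step V p q q' ∧ Sat V σ f q'
  | .edia f, q => ∃ p q', Step V p q q' ∧ Sat V σ f q'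

/-- `C(q, Φ)`: the sub-framework consisting of the connected components of the
AF `q` which meet `Φ`. -/
def compUnion {α : Type*} (S : Set α) (E : Set (α × α)) (Φ : Set α) :
    Set α × Set (α × α) :=
  ({y ∈ S | ∃ φ ∈ Φ, Relation.EqvGen (undirected E S) y φ},
   restrict E {y ∈ S | ∃ φ ∈ Φ, Relation.EqvGen (undirected E S) y φ})

/-- A semantics is normal if extensions are exactly unions of one extension per
maximal connected component. -/
def NormalSem {α : Type*} (σ : Set α → Set (α × α) → Set (Set α)) : Prop :=
  ∀ S E A, A ∈ σ S E ↔ ∃ f : Set α → Set α,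
    (∀ C ∈ components S E, f C ∈ σ C (restrict E C)) ∧
    A = ⋃ C ∈ components S E, f C

/-- `n`-bisimilarity modulo `Φ` between states of the deliberative Kripke models
induced by bases `V` and `V'`. -/
def NBisim {α A B : Type*} (V : A → Set (α × α)) (V' : B → Set (α × α))
    (n : ℕ) (Φ : Set α) (q q' : Set α × Set (α × α)) : Prop :=
  ∃ Z : ℕ → (Set α × Set (α × α)) → (Set α × Set (α × α)) → Prop,
    (∀ i v v', Z (i + 1) v v' → Z i v v') ∧
    Z n q q' ∧
    (∀ v v', Z 0 v v' → compUnion v.1 v.2 Φ = compUnion v'.1 v'.2 Φ) ∧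
    (∀ i p v v' u, Z (i + 1) v v' → Step V p v u →
      ∃ u', Step V' p v' u' ∧ Z i u u') ∧
    (∀ i p v v' u', Z (i + 1) v v' → Step V' p v' u' →
      ∃ u, Step V p v u ∧ Z i u u')

/-- The union of a chain of admissible sets is admissible. -/
theorem iUnion_chain_admissible {α : Type*} {ι : Type*} (S : Set α) (E : Set (α × α))
    (A : ι → Set α) (hadm : ∀ i, IsAdmissible S E (A i))
    (hchain : ∀ i j, A i ⊆ A j ∨ A j ⊆ A i) :
    IsAdmissible S E (⋃ i, A i) := by
  refine ⟨Set.iUnion_subset fun i => (hadm i).1, ?_, ?_⟩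
  · rintro y ⟨hyS, x, hx, hE⟩
    obtain ⟨i, hxi⟩ := Set.mem_iUnion.mp hx
    obtain ⟨hyS', x', hx', hE'⟩ := (hadm i).2.1 ⟨hyS, x, hxi, hE⟩
    exact ⟨hyS', x', Set.mem_iUnion.mpr ⟨i, hx'⟩, hE'⟩
  · rintro y ⟨hyS, x, hx, hE⟩
    obtain ⟨i, hxi⟩ := Set.mem_iUnion.mp hx
    refine ⟨hyS, fun hy => ?_⟩
    obtain ⟨j, hyj⟩ := Set.mem_iUnion.mp hy
    rcases hchain i j with h | h
    · exact ((hadm j).2.2 ⟨hyS, x, h hxi, hE⟩).2 hyj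
    · exact ((hadm i).2.2 ⟨hyS, x, hxi, hE⟩).2 (h hyj)
end

section
/- The admissible semantics is normal: a set A is admissible in AF if and only if A is a union ⋃_i A_i where A_i is admissible in the i-th maximal connected component C_i of AF (one A_i per component). -/
section Helpers
variable {α : Type*} (S : Set α) (E : Set (α × α))

lemma comp_subset (x : α) : comp S E x ⊆ S := fun _ h => h.1

lemma mem_comp_self {x : α} (hx : x ∈ S) : x ∈ comp S E x :=
  ⟨hx, Relation.EqvGen.refl x⟩

lemma comp_eq_of_mem {x y : α} (hy : y ∈ comp S E x) : comp S E y = comp S E x := by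
  ext z
  constructor
  · rintro ⟨hz, h⟩
    exact ⟨hz, Relation.EqvGen.trans _ _ _ hy.2 h⟩
  · rintro ⟨hz, h⟩
    exact ⟨hz, Relation.EqvGen.trans _ _ _ (Relation.EqvGen.symm _ _ hy.2) h⟩

lemma mem_comp_of_edge {x u v : α} (hu : u ∈ S) (hv : v ∈ S)
    (he : (u, v) ∈ E) (hvc : v ∈ comp S E x) : u ∈ comp S E x :=
  ⟨hu, Relation.EqvGen.trans _ _ _ hvc.2
    (Relation.EqvGen.symm _ _ (Relation.EqvGen.rel _ _ ⟨hu, hv, Or.inl he⟩))⟩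

lemma mem_comp_of_edge' {x u v : α} (hu : u ∈ S) (hv : v ∈ S)
    (he : (u, v) ∈ E) (huc : u ∈ comp S E x) : v ∈ comp S E x :=
  ⟨hv, Relation.EqvGen.trans _ _ _ huc.2 (Relation.EqvGen.rel _ _ ⟨hu, hv, Or.inl he⟩)⟩

end Helpers

/-- The admissible semantics is normal: `A` is admissible in
`(S, E)` iff `A` is a union of one admissible set per maximal connected
component of `(S, E)`. -/
theorem admissible_normal {α : Type*} (S : Set α) (E : Set (α × α)) (A : Set α) :
    IsAdmissible S E A ↔ ∃ f : Set α → Set α,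
      (∀ C ∈ components S E, IsAdmissible C (restrict E C) (f C)) ∧
      A = ⋃ C ∈ components S E, f C := by
  constructor
  · rintro ⟨hAS, h1, h2⟩
    refine ⟨fun C => A ∩ C, ?_, ?_⟩
    · rintro C ⟨c, hc, rfl⟩
      refine ⟨Set.inter_subset_right, ?_, ?_⟩
      · rintro y ⟨hyC, x, ⟨hxA, hxC⟩, hyx, -, -⟩
        have hyS : y ∈ S := (comp_subset S E c) hyC
        obtain ⟨-, z, hzA, hzy⟩ := h1 ⟨hyS, x, hxA, hyx⟩
        have hzC : z ∈ comp S E c :=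
          mem_comp_of_edge S E (hAS hzA) hyS hzy hyC
        exact ⟨hyC, z, ⟨hzA, hzC⟩, hzy, hzC, hyC⟩
      · rintro y ⟨hyC, x, ⟨hxA, hxC⟩, hxy, -, -⟩
        have hyS : y ∈ S := (comp_subset S E c) hyC
        have := h2 ⟨hyS, x, hxA, hxy⟩
        exact ⟨hyC, fun hy => this.2 hy.1⟩
    · ext a
      simp only [Set.mem_iUnion, Set.mem_inter_iff]
      constructor
      · intro ha
        exact ⟨comp S E a, ⟨a, hAS ha, rfl⟩, ha, mem_comp_self S E (hAS ha)⟩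
      · rintro ⟨C, -, ha, -⟩
        exact ha
  · rintro ⟨f, hf, rfl⟩
    have hsub : ∀ C ∈ components S E, f C ⊆ C := fun C hC => (hf C hC).1
    have hAS : (⋃ C ∈ components S E, f C) ⊆ S := by
      rintro a ha
      simp only [Set.mem_iUnion] at ha
      obtain ⟨C, hC, haC⟩ := ha
      obtain ⟨c, hc, rfl⟩ := hC
      exact (comp_subset S E c) (hsub _ ⟨c, hc, rfl⟩ haC)
    refine ⟨hAS, ?_, ?_⟩
    · rintro y ⟨hyS, x, hxA, hyx⟩
      simp only [Set.mem_iUnion] at hxA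
      obtain ⟨C, hC, hxC⟩ := hxA
      obtain ⟨c, hc, rfl⟩ := hC
      set C := comp S E c
      have hCmem : C ∈ components S E := ⟨c, hc, rfl⟩
      have hxC' : x ∈ C := hsub _ hCmem hxC
      have hyC : y ∈ C := mem_comp_of_edge S E hyS ((comp_subset S E c) hxC') hyx hxC'
      obtain ⟨-, z, hzf, hzy, hzC, hyC'⟩ :=
        (hf _ hCmem).2.1 ⟨hyC, x, hxC, ⟨hyx, hyC, hxC'⟩⟩
      refine ⟨hyS, z, ?_, hzy⟩
      simp only [Set.mem_iUnion]
      exact ⟨C, hCmem, hzf⟩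
    · rintro y ⟨hyS, x, hxA, hxy⟩
      refine ⟨hyS, ?_⟩
      simp only [Set.mem_iUnion] at hxA ⊢
      obtain ⟨C, hC, hxC⟩ := hxA
      obtain ⟨c, hc, rfl⟩ := hC
      set C := comp S E c with hCdef
      have hCmem : C ∈ components S E := ⟨c, hc, rfl⟩
      have hxC' : x ∈ C := hsub _ hCmem hxC
      have hyC : y ∈ C := mem_comp_of_edge' S E ((comp_subset S E c) hxC') hyS hxy hxC'
      rintro ⟨C', hC', hyf⟩
      obtain ⟨c', hc', rfl⟩ := hC'
      have hyC'' : y ∈ comp S E c' := hsub _ ⟨c', hc', rfl⟩ hyf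
      have hCC : comp S E c' = C := by
        rw [← comp_eq_of_mem S E hyC'', comp_eq_of_mem S E hyC]
      rw [hCC] at hyf
      exact ((hf _ hCmem).2.2 ⟨hyC, x, hxC, hxy, hxC', hyC⟩).2 hyf
end

section
/- Admissibility depends only on connected components: if A ⊆ S and for every connected component C of AF = (S, E), A ∩ C is admissible in the sub-framework induced by C, then A is admissible in AF. -/
/-- Admissibility depends only on connected components: if
`A ⊆ S` and `A ∩ C` is admissible in the sub-framework induced by every
connected component `C`, then `A` is admissible in `(S, E)`. -/
theorem admissible_of_components {α : Type*} (S : Set α) (E : Set (α × α)) (A : Set α)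
    (hAS : A ⊆ S)
    (h : ∀ C ∈ components S E, IsAdmissible C (restrict E C) (A ∩ C)) :
    IsAdmissible S E A := by
  refine ⟨hAS, ?_, ?_⟩
  · rintro y ⟨hyS, x, hxA, hyxE⟩
    have hxS := hAS hxA
    have hC : comp S E x ∈ components S E := ⟨x, hxS, rfl⟩
    have hxC : x ∈ comp S E x := ⟨hxS, Relation.EqvGen.refl x⟩
    have hyC : y ∈ comp S E x :=
      ⟨hyS, Relation.EqvGen.symm _ _ (Relation.EqvGen.rel y x ⟨hyS, hxS, Or.inl hyxE⟩)⟩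
    obtain ⟨_, hsub, _⟩ := h _ hC
    have : y ∈ attackedBy (comp S E x) (restrict E (comp S E x)) (A ∩ comp S E x) :=
      hsub ⟨hyC, x, ⟨hxA, hxC⟩, ⟨hyxE, hyC, hxC⟩⟩
    obtain ⟨_, z, ⟨hzA, _⟩, hzE, _, _⟩ := this
    exact ⟨hyS, z, hzA, hzE⟩
  · rintro y ⟨hyS, x, hxA, hxyE⟩
    have hxS := hAS hxA
    have hC : comp S E x ∈ components S E := ⟨x, hxS, rfl⟩
    have hxC : x ∈ comp S E x := ⟨hxS, Relation.EqvGen.refl x⟩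
    have hyC : y ∈ comp S E x :=
      ⟨hyS, Relation.EqvGen.rel x y ⟨hxS, hyS, Or.inl hxyE⟩⟩
    obtain ⟨_, _, hsub⟩ := h _ hC
    have : y ∈ comp S E x \ (A ∩ comp S E x) :=
      hsub ⟨hyC, x, ⟨hxA, hxC⟩, ⟨hxyE, hxC, hyC⟩⟩
    exact ⟨hyS, fun hyA => this.2 ⟨hyA, hyC⟩⟩
end

section
/- Update commutativity: for any state q and arguments p, r, the set of states reachable by a p-update followed by an r-update equals the set of states reachable by an r-update followed by a p-update. (This underlies the validity of ⟨p⟩⟨r⟩φ ↔ ⟨r⟩⟨p⟩φ.) -/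
lemma restrict_mono {α : Type*} (E : Set (α × α)) {C D : Set α} (h : C ⊆ D) :
    restrict E C ⊆ restrict E D := fun e he => ⟨he.1, h he.2.1, h he.2.2⟩

lemma step_comm_aux {α A : Type*} (V : A → Set (α × α)) (p r : α)
    (q q'' : Set α × Set (α × α)) :
    (∃ q', Step V p q q' ∧ Step V r q' q'') →
      (∃ q', Step V r q q' ∧ Step V p q' q'') := by
  rintro ⟨q', ⟨h1, X, hX1, hX2, hX3⟩, ⟨h1', Y, hY1, hY2, hY3⟩⟩
  have hsub : q.1 ∪ {r} ⊆ q.1 ∪ {p} ∪ {r} := by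
    intro x hx; rcases hx with hx | hx
    · exact Or.inl (Or.inl hx)
    · exact Or.inr hx
  have hsub2 : q.1 ∪ {p} ⊆ q.1 ∪ {p} ∪ {r} := Set.subset_union_left
  have hfull : q'.1 ∪ {r} = q.1 ∪ {p} ∪ {r} := by rw [h1]
  -- X₀ ⊆ Y
  have hX0Y : (⋂ a, restrict (V a) (q.1 ∪ {r})) ⊆ Y := by
    refine subset_trans ?_ hY1
    rw [hfull]
    exact Set.iInter_mono fun a => restrict_mono _ hsub
  refine ⟨(q.1 ∪ {r}, q.2 ∪ ⋂ a, restrict (V a) (q.1 ∪ {r})), ⟨rfl, _, subset_rfl,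
    ?_, rfl⟩, ?_, X ∪ Y, ?_, ?_, ?_⟩
  · intro e he
    have hA : Nonempty A := by
      by_contra h
      haveI := not_nonempty_iff.mp h
      have he' : e ∈ (⋂ a, restrict (V a) (q.1 ∪ {p})) := by simp
      have := hX2 (hX1 he')
      simp at this
    obtain ⟨a⟩ := hA
    exact Set.mem_iUnion.mpr ⟨a, Set.mem_iInter.mp he a⟩
  · show q''.1 = (q.1 ∪ {r}) ∪ {p}
    rw [h1', h1]
    simp only [Set.union_assoc, Set.union_comm {p} {r}]
  · refine subset_trans ?_ Set.subset_union_right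
    rw [hfull] at hY1
    have : q.1 ∪ {r} ∪ {p} = q.1 ∪ {p} ∪ {r} := by
      simp only [Set.union_assoc, Set.union_comm {p} {r}]
    rw [this]; exact hY1
  · have h3 : q.1 ∪ {r} ∪ {p} = q.1 ∪ {p} ∪ {r} := by
      simp only [Set.union_assoc, Set.union_comm {p} {r}]
    rw [h3]
    rw [hfull] at hY2
    apply Set.union_subset _ hY2
    exact subset_trans hX2 (Set.iUnion_mono fun a => restrict_mono _ hsub2)
  · show q''.2 = (q.2 ∪ ⋂ a, restrict (V a) (q.1 ∪ {r})) ∪ (X ∪ Y)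
    rw [hY3, hX3]
    rw [Set.union_assoc, Set.union_assoc]
    congr 1
    rw [← Set.union_assoc, Set.union_comm (⋂ a, restrict (V a) (q.1 ∪ {r})) X,
      Set.union_assoc, Set.union_eq_right.mpr hX0Y]

/-- Update commutativity: a `p`-update followed by an `r`-update
reaches exactly the same states as an `r`-update followed by a `p`-update. -/
theorem step_comm {α A : Type*} (V : A → Set (α × α)) (p r : α)
    (q q'' : Set α × Set (α × α)) (hq : IsState V q) :
    (∃ q', Step V p q q' ∧ Step V r q' q'') ↔
      (∃ q', Step V r q q' ∧ Step V p q' q'') :=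
  ⟨step_comm_aux V p r q q'', step_comm_aux V r p q q''⟩
end

section
/- Update idempotence: if q →_p q' →_p q'' then q →_p q''. Equivalently, the formula ⟨p⟩⟨p⟩φ → ⟨p⟩φ is valid on deliberative Kripke models. -/
/-- Update idempotence: if `q →_p q' →_p q''` then `q →_p q''`.
(This underlies the validity of `⟨p⟩⟨p⟩φ → ⟨p⟩φ`.) -/
theorem step_idem {α A : Type*} (V : A → Set (α × α)) (p : α)
    (q q' q'' : Set α × Set (α × α))
    (h1 : Step V p q q') (h2 : Step V p q' q'') : Step V p q q'' := by
  obtain ⟨hq1, X, hXl, hXu, hX⟩ := h1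
  obtain ⟨hq2, Y, hYl, hYu, hY⟩ := h2
  have he : q'.1 ∪ {p} = q.1 ∪ {p} := by
    rw [hq1, Set.union_assoc, Set.union_self]
  rw [he] at hYl hYu
  refine ⟨by rw [hq2, hq1, Set.union_assoc, Set.union_self], X ∪ Y,
    hXl.trans Set.subset_union_left, Set.union_subset hXu hYu, ?_⟩
  rw [hY, hX, Set.union_assoc]
end

section
/- The Church–Rosser-like property holds semantically in the following sense: if q₀ →_p q₁, then for every q₂ with q₀ →_r q₂ there exists q₃ with q₂ →_p q₃ and q₁ →_r q₃. -/
/-- Confluence: from `q₀ →_p q₁` and `q₀ →_r q₂` there exists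
`q₃` with `q₁ →_r q₃` and `q₂ →_p q₃`. -/
theorem step_confluent {α A : Type*} (V : A → Set (α × α)) (p r : α)
    (q0 q1 q2 : Set α × Set (α × α))
    (h1 : Step V p q0 q1) (h2 : Step V r q0 q2) :
    ∃ q3, Step V r q1 q3 ∧ Step V p q2 q3 := by
  obtain ⟨hs1, X, hXl, hXu, hX2⟩ := h1
  obtain ⟨hs2, Y, hYl, hYu, hY2⟩ := h2
  set T : Set α := q0.1 ∪ {p} ∪ {r} with hT
  have hT1 : q1.1 ∪ {r} = T := by rw [hs1]
  have hT2 : q2.1 ∪ {p} = T := by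
    rw [hs2, hT]; ext x; simp [Set.mem_union]; tauto
  have hmono : ∀ (S S' : Set α) a, S ⊆ S' →
      restrict (V a) S ⊆ restrict (V a) S' := by
    intro S S' a hSS e he
    exact ⟨he.1, hSS he.2.1, hSS he.2.2⟩
  have hsubP : q0.1 ∪ {p} ⊆ T := by intro x hx; exact Or.inl hx
  have hsubR : q0.1 ∪ {r} ⊆ T := by
    intro x hx; rcases hx with hx | hx
    · exact Or.inl (Or.inl hx)
    · exact Or.inr hx
  set Z : Set (α × α) := ⋂ a, restrict (V a) T with hZ
  have hZU : Z ⊆ ⋃ a, restrict (V a) T := by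
    intro x hx
    rcases isEmpty_or_nonempty A with h | ⟨⟨a⟩⟩
    · have hmem : x ∈ ⋂ a, restrict (V a) (q0.1 ∪ {p}) :=
        Set.mem_iInter.mpr fun a => h.elim a
      exact absurd (hXu (hXl hmem)) (by simp)
    · exact Set.mem_iUnion.mpr ⟨a, Set.mem_iInter.mp hx a⟩
  refine ⟨(T, q0.2 ∪ (X ∪ Y ∪ Z)), ⟨hT1.symm, Y ∪ Z, ?_, ?_, ?_⟩, ⟨hT2.symm, X ∪ Z, ?_, ?_, ?_⟩⟩
  · rw [hT1]; intro x hx; exact Or.inr (Set.mem_iInter.mpr fun a => Set.mem_iInter.mp hx a)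
  · rw [hT1]; intro x hx
    rcases hx with hx | hx
    · obtain ⟨s, ⟨a, rfl⟩, hxs⟩ := hYu hx
      exact ⟨_, ⟨a, rfl⟩, hmono _ _ a hsubR hxs⟩
    · exact hZU hx
  · rw [hX2]; ext x; simp [Set.mem_union]; tauto
  · rw [hT2]; intro x hx; exact Or.inr (Set.mem_iInter.mpr fun a => Set.mem_iInter.mp hx a)
  · rw [hT2]; intro x hx
    rcases hx with hx | hx
    · obtain ⟨s, ⟨a, rfl⟩, hxs⟩ := hXu hx
      exact ⟨_, ⟨a, rfl⟩, hmono _ _ a hsubP hxs⟩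
    · exact hZU hx
  · rw [hY2]; ext x; simp [Set.mem_union]; tauto
end

section
/- The converse direction fails: there exist a basis with two agents and two arguments p, q such that the diamond property '[q]⟨p⟩φ → ⟨p⟩[q]φ' fails; concretely, with V_a = {(p,q)} and V_b = {(q,p)}, every q-update from the empty state has a p-update making the resulting framework have {p} admissible-maximal, but no single p-update from the empty state guarantees this for all subsequent q-updates. -/
lemma adm_single' {α : Type*} (x y : α) (h : x ≠ y) :
    IsAdmissible ({x, y} : Set α) ({(x, y)} : Set (α × α)) {x} := by
  refine ⟨by simp, ?_, ?_⟩
  · intro z hz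
    obtain ⟨hzS, w, hw, hwz⟩ := hz
    simp only [Set.mem_singleton_iff, Prod.mk.injEq] at hw hwz
    exact absurd (hw.symm.trans hwz.2) h
  · intro z hz
    obtain ⟨hzS, w, hw, hwz⟩ := hz
    simp only [Set.mem_singleton_iff, Prod.mk.injEq] at hw hwz
    refine ⟨hzS, ?_⟩
    simp only [Set.mem_singleton_iff]
    rw [hwz.2]; exact h.symm

lemma pref_single' {α : Type*} (x y : α) (h : x ≠ y) :
    IsPreferred ({x, y} : Set α) ({(x, y)} : Set (α × α)) {x} := by
  refine ⟨adm_single' x y h, ?_⟩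
  intro C hC hsub
  obtain ⟨hCS, _, hatk⟩ := hC
  apply Set.Subset.antisymm hsub
  intro z hzC
  rcases hCS hzC with hz | hz
  · exact hz
  · exfalso
    have : z ∈ attackedBy ({x, y} : Set α) ({(x, y)} : Set (α × α)) C := by
      refine ⟨hCS hzC, x, hsub rfl, ?_⟩
      simp only [Set.mem_singleton_iff] at hz
      simp [hz]
    exact (hatk this).2 hzC

lemma pref_forces' {α : Type*} (x y : α) (h : x ≠ y) (B : Set α)
    (hB : IsPreferred ({x, y} : Set α) ({(x, y)} : Set (α × α)) B) : x ∈ B := by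
  obtain ⟨⟨hBS, hdef, _⟩, hmax⟩ := hB
  have hy : y ∉ B := by
    intro hyB
    have hx : x ∈ attackersOf ({x, y} : Set α) ({(x, y)} : Set (α × α)) B :=
      ⟨by simp, y, hyB, rfl⟩
    obtain ⟨_, w, hwB, hwx⟩ := hdef hx
    simp only [Set.mem_singleton_iff, Prod.mk.injEq] at hwx
    exact h hwx.2
  have hsub : B ⊆ {x} := by
    intro z hz
    rcases hBS hz with h1 | h1
    · exact h1
    · exact absurd (h1 ▸ hz) hy
  have := hmax {x} (adm_single' x y h) hsub
  rw [this]; rfl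

/-- The converse diamond property fails: with `V_a = {(p,q)}` and
`V_b = {(q,p)}`, every `q`-update from the empty state has a `p`-update making
`p` skeptically accepted under the preferred semantics, but no single
`p`-update from the empty state guarantees this for all subsequent
`q`-updates. -/
theorem diamond_converse_fails {α : Type*} (p q : α) (hpq : p ≠ q) :
    let V : Bool → Set (α × α) := fun a => if a then {(p, q)} else {(q, p)}
    let P : Set α × Set (α × α) → Prop := fun s => ∀ B, IsPreferred s.1 s.2 B → p ∈ B
    (∀ q2, Step V q (∅, ∅) q2 → ∃ q3, Step V p q2 q3 ∧ P q3) ∧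
      ¬ (∃ q1, Step V p (∅, ∅) q1 ∧ ∀ q3, Step V q q1 q3 → P q3) := by
  intro V P
  have hVt : V true = {(p, q)} := if_pos rfl
  have hVf : V false = {(q, p)} := if_neg (by simp)
  constructor
  · intro q2 hstep
    obtain ⟨h1, X, hX1, hX2, h2⟩ := hstep
    have hXe : X = ∅ := by
      ext x
      simp only [Set.mem_empty_iff_false, iff_false]
      intro hx
      have hx2 := hX2 hx
      simp only [Set.mem_iUnion] at hx2
      obtain ⟨a, he, hm1, hm2⟩ := hx2
      cases a
      · rw [hVf] at he
        simp only [Set.mem_singleton_iff] at he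
        rw [he] at hm2
        simp at hm2
        exact hpq hm2
      · rw [hVt] at he
        simp only [Set.mem_singleton_iff] at he
        rw [he] at hm1
        simp at hm1
        exact hpq hm1
    refine ⟨(q2.1 ∪ {p}, q2.2 ∪ {(p, q)}), ⟨rfl, {(p, q)}, ?_, ?_, rfl⟩, ?_⟩
    · intro x hx
      simp only [Set.mem_iInter] at hx
      have ht := hx true
      have hf := hx false
      rw [hVt] at ht; rw [hVf] at hf
      obtain ⟨he1, -, -⟩ := ht
      obtain ⟨he2, -, -⟩ := hf
      simp only [Set.mem_singleton_iff] at he1 he2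
      rw [he1] at he2
      simp only [Prod.mk.injEq] at he2
      exact absurd he2.1 hpq
    · intro x hx
      simp only [Set.mem_singleton_iff] at hx
      subst hx
      refine Set.mem_iUnion.mpr ⟨true, ?_⟩
      refine ⟨by rw [hVt]; rfl, ?_, ?_⟩
      · exact Or.inr rfl
      · exact Or.inl (h1 ▸ Or.inr rfl)
    · intro B hB
      have hS : q2.1 ∪ {p} = ({p, q} : Set α) := by
        rw [h1]; ext z; simp [Set.mem_insert_iff]
      have hE : q2.2 ∪ {(p, q)} = ({(p, q)} : Set (α × α)) := by
        rw [h2, hXe]; simp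
      have hB' : IsPreferred ({p, q} : Set α) ({(p, q)} : Set (α × α)) B := by
        rw [← hS, ← hE]; exact hB
      exact pref_forces' p q hpq B hB'
  · rintro ⟨q1, ⟨h1, X, hX1, hX2, h2⟩, hall⟩
    have hXe : X = ∅ := by
      ext x
      simp only [Set.mem_empty_iff_false, iff_false]
      intro hx
      have hx2 := hX2 hx
      simp only [Set.mem_iUnion] at hx2
      obtain ⟨a, he, hm1, hm2⟩ := hx2
      cases a
      · rw [hVf] at he
        simp only [Set.mem_singleton_iff] at he
        rw [he] at hm1
        simp at hm1
        exact hpq hm1.symm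
      · rw [hVt] at he
        simp only [Set.mem_singleton_iff] at he
        rw [he] at hm2
        simp at hm2
        exact hpq hm2.symm
    have hstep : Step V q q1 (q1.1 ∪ {q}, q1.2 ∪ {(q, p)}) := by
      refine ⟨rfl, {(q, p)}, ?_, ?_, rfl⟩
      · intro x hx
        simp only [Set.mem_iInter] at hx
        have ht := hx true
        have hf := hx false
        rw [hVt] at ht; rw [hVf] at hf
        obtain ⟨he1, -, -⟩ := ht
        obtain ⟨he2, -, -⟩ := hf
        simp only [Set.mem_singleton_iff] at he1 he2
        rw [he1] at he2
        simp only [Prod.mk.injEq] at he2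
        exact absurd he2.1 hpq
      · intro x hx
        simp only [Set.mem_singleton_iff] at hx
        subst hx
        refine Set.mem_iUnion.mpr ⟨false, ?_⟩
        refine ⟨by rw [hVf]; rfl, ?_, ?_⟩
        · exact Or.inr rfl
        · exact Or.inl (h1 ▸ Or.inr rfl)
    have hP := hall _ hstep
    have hS : q1.1 ∪ {q} = ({q, p} : Set α) := by
      rw [h1]; ext z; simp [Set.mem_insert_iff]
    have hE : q1.2 ∪ {(q, p)} = ({(q, p)} : Set (α × α)) := by
      rw [h2, hXe]; simp
    have hpref : IsPreferred (q1.1 ∪ {q}) (q1.2 ∪ {(q, p)}) ({q} : Set α) := by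
      rw [hS, hE]; exact pref_single' q p hpq.symm
    have := hP {q} hpref
    exact hpq (by simpa using this)
end

section
/- Component isolation lemma: let AF = (S, E) be a framework, Φ ⊆ S, and suppose every element of S lies on an undirected E-path of length at most n, while every undirected E-path from an element outside D (the n-vicinity of Φ in E) to an element of Φ has more than n nodes. Then no connected component of AF containing an element of Φ contains an element outside D; hence the union of components meeting Φ is determined by E ∩ (D × D). -/
/-- Component isolation lemma: if any two connected elements of
`S` are joined by an undirected path with at most `n` nodes, and every
undirected path from an element outside the `n`-vicinity `D` of `Φ` to `Φ` has
more than `n` nodes, then no component meeting `Φ` contains an element outside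
`D`; hence the union of components meeting `Φ` is determined by `E ∩ (D × D)`. -/
theorem component_isolation {α : Type*} (S : Set α) (E : Set (α × α)) (Φ : Set α)
    (n : ℕ) (hΦS : Φ ⊆ S)
    (h1 : ∀ x ∈ S, ∀ y ∈ S, Relation.EqvGen (undirected E S) x y →
      ∃ l : List α, ∃ h : l ≠ [], l.length ≤ n ∧ l.head h = x ∧ l.getLast h = y ∧
        l.Chain' (undirEdge E))
    (h2 : ∀ l : List α, ∀ h : l ≠ [], l.Chain' (undirEdge E) →
      l.head h ∉ pathVicinity E Φ n → l.getLast h ∈ Φ → n < l.length) :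
    (∀ C ∈ components S E, (C ∩ Φ).Nonempty → C ⊆ pathVicinity E Φ n) ∧
      (compUnion S E Φ = compUnion S (restrict E (pathVicinity E Φ n)) Φ) := by

  set D := pathVicinity E Φ n with hD
  -- Part 1
  have part1 : ∀ C ∈ components S E, (C ∩ Φ).Nonempty → C ⊆ D := by
    rintro C ⟨x, hxS, rfl⟩ ⟨φ, ⟨⟨hφS, hxφ⟩, hφΦ⟩⟩ y ⟨hyS, hxy⟩
    have hyφ : Relation.EqvGen (undirected E S) y φ :=
      Relation.EqvGen.trans _ _ _ (Relation.EqvGen.symm _ _ hxy) hxφ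
    obtain ⟨l, hne, hlen, hhead, hlast, hchain⟩ := h1 y hyS φ hφS hyφ
    by_contra hy
    have := h2 l hne hchain (by rw [hhead]; exact hy) (by rw [hlast]; exact hφΦ)
    omega
  refine ⟨part1, ?_⟩
  -- every S-element connected to Φ lies in D
  have hT : ∀ y ∈ S, ∀ φ ∈ Φ, Relation.EqvGen (undirected E S) y φ → y ∈ D := by
    intro y hyS φ hφΦ hyφ
    have hφS := hΦS hφΦ
    exact part1 (comp S E φ) ⟨φ, hφS, rfl⟩
      ⟨φ, ⟨hφS, Relation.EqvGen.refl φ⟩, hφΦ⟩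
      ⟨hyS, Relation.EqvGen.symm _ _ hyφ⟩
  -- restricted relation generates the same connectivity to Φ
  have key : ∀ φ ∈ Φ, ∀ u v, Relation.EqvGen (undirected E S) u v →
      Relation.EqvGen (undirected E S) v φ →
      Relation.EqvGen (undirected (restrict E D) S) u v := by
    intro φ hφΦ u v huv
    induction huv with
    | rel a b hab =>
      intro hbφ
      obtain ⟨haS, hbS, he⟩ := hab
      have haφ : Relation.EqvGen (undirected E S) a φ :=
        Relation.EqvGen.trans _ _ _ (Relation.EqvGen.rel _ _ ⟨haS, hbS, he⟩) hbφ
      have haD := hT a haS φ hφΦ haφ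
      have hbD := hT b hbS φ hφΦ hbφ
      refine Relation.EqvGen.rel _ _ ⟨haS, hbS, ?_⟩
      rcases he with he | he
      · exact Or.inl ⟨he, haD, hbD⟩
      · exact Or.inr ⟨he, hbD, haD⟩
    | refl a => intro _; exact Relation.EqvGen.refl a
    | symm a b hab ih =>
      intro haφ
      exact Relation.EqvGen.symm _ _
        (ih (Relation.EqvGen.trans _ _ _ (Relation.EqvGen.symm _ _ hab) haφ))
    | trans a b c hab hbc ih1 ih2 =>
      intro hcφ
      have hbφ : Relation.EqvGen (undirected E S) b φ :=
        Relation.EqvGen.trans _ _ _ hbc hcφ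
      exact Relation.EqvGen.trans _ _ _ (ih1 hbφ) (ih2 hcφ)
  have hmono : ∀ u v, Relation.EqvGen (undirected (restrict E D) S) u v →
      Relation.EqvGen (undirected E S) u v := by
    intro u v h
    refine Relation.EqvGen.mono ?_ _ _ h
    rintro a b ⟨haS, hbS, he | he⟩
    · exact ⟨haS, hbS, Or.inl he.1⟩
    · exact ⟨haS, hbS, Or.inr he.1⟩
  have hset : {y ∈ S | ∃ φ ∈ Φ, Relation.EqvGen (undirected E S) y φ} =
      {y ∈ S | ∃ φ ∈ Φ, Relation.EqvGen (undirected (restrict E D) S) y φ} := by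
    ext y
    constructor
    · rintro ⟨hyS, φ, hφΦ, hyφ⟩
      exact ⟨hyS, φ, hφΦ, key φ hφΦ y φ hyφ (Relation.EqvGen.refl φ)⟩
    · rintro ⟨hyS, φ, hφΦ, hyφ⟩
      exact ⟨hyS, φ, hφΦ, hmono _ _ hyφ⟩
  unfold compUnion
  rw [← hset]
  refine Prod.ext rfl ?_
  simp only
  ext e
  constructor
  · rintro ⟨heE, h1e, h2e⟩
    obtain ⟨h1S, φ1, hφ1, hc1⟩ := h1e
    obtain ⟨h2S, φ2, hφ2, hc2⟩ := h2e
    exact ⟨⟨heE, hT e.1 h1S φ1 hφ1 hc1, hT e.2 h2S φ2 hφ2 hc2⟩, ⟨h1S, φ1, hφ1, hc1⟩, ⟨h2S, φ2, hφ2, hc2⟩⟩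
  · rintro ⟨⟨heE, _, _⟩, h1e, h2e⟩
    exact ⟨heE, h1e, h2e⟩
end
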